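/- arXiv:1912.04489 — 2 statements merged into one kernel-verified Lean document; each statement's English description precedes it below -/
import Mathlib

section
/- Let n ≥ 7 with n ≡ 1 or 5 (mod 6) (not necessarily prime). For each 1 ≤ i ≤ (n-1)/2, the edge set A_i ∪ B_i ∪ D_{i-1} can be partitioned into three perfect matchings of the complete graph on {0,...,2n-1}, where A_i, B_i, D_{i-1} are as defined: A_i = { {x,y} ⊂ {0,...,n-1} : y-x ≡ ±i (mod n) }, B_i = { {x,y} ⊂ {n,...,2n-1} : y-x ≡ ±i (mod n) }, D_{i-1} = { {x,y} : 0 ≤ x ≤ n-1, n ≤ y ≤ 2n-1, y-x ≡ i-1 (mod n) }. -/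
/-- `A_i = { {x,y} ⊆ {0,…,n-1} : y - x ≡ ±i (mod n) }`. -/
def AA (n i : ℕ) : Set (Finset ℕ) :=
  { p | ∃ x y : ℕ, x < n ∧ y < n ∧ x ≠ y ∧
      ((y + n - x) % n = i ∨ (x + n - y) % n = i) ∧ p = {x, y} }

/-- `B_i = { {x,y} ⊆ {n,…,2n-1} : y - x ≡ ±i (mod n) }`. -/
def BB (n i : ℕ) : Set (Finset ℕ) :=
  { p | ∃ x y : ℕ, n ≤ x ∧ x < 2 * n ∧ n ≤ y ∧ y < 2 * n ∧ x ≠ y ∧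
      ((y + n - x) % n = i ∨ (x + n - y) % n = i) ∧ p = {x, y} }

/-- `C_i = { {x,y} : 0 ≤ x ≤ n-1, n ≤ y ≤ 2n-1, x + y ≡ i (mod n) }`. -/
def DD (n i : ℕ) : Set (Finset ℕ) :=
  { p | ∃ x y : ℕ, x < n ∧ n ≤ y ∧ y < 2 * n ∧ (y - x) % n = i ∧ p = {x, y} }

/-- A perfect matching (one-factor) of the complete graph on `{0,…,2n-1}`. -/
def IsOneFactor (n : ℕ) (F : Set (Finset ℕ)) : Prop :=
  (∀ p ∈ F, p.card = 2 ∧ ∀ x ∈ p, x < 2 * n) ∧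
  (F.Pairwise fun p q => Disjoint p q) ∧
  (∀ v < 2 * n, ∃ p ∈ F, v ∈ p)


namespace ABDaux

/-- gcd -/
def dd (n i : ℕ) : ℕ := Nat.gcd i n
/-- cycle length -/
def mm (n i : ℕ) : ℕ := n / Nat.gcd i n
/-- top vertex at coordinates (a,k) -/
def vv (n i a k : ℕ) : ℕ := (a + k * i) % n
/-- rung partner (bottom vertex) of top vertex x -/
def rr (n i x : ℕ) : ℕ := n + (x + i - 1) % n

def topE (n i a k : ℕ) : Finset ℕ := {vv n i a k, vv n i a ((k+1) % mm n i)}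
def botE (n i a k : ℕ) : Finset ℕ := {rr n i (vv n i a k), rr n i (vv n i a ((k+1) % mm n i))}
def rungE (n i a k : ℕ) : Finset ℕ := {vv n i a k, rr n i (vv n i a k)}

def topOK (n i c k : ℕ) : Prop := if c = 3 then k = mm n i - 1 else (k + 1 < mm n i ∧ k % 2 = c - 1)
def rungOK (n i c k : ℕ) : Prop :=
  if c = 1 then k = mm n i - 1 else if c = 2 then k = 0 else (1 ≤ k ∧ k ≤ mm n i - 2)

def FF (n i c : ℕ) : Set (Finset ℕ) :=
  {p | ∃ a, a < dd n i ∧ ∃ k, k < mm n i ∧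
    ((topOK n i c k ∧ (p = topE n i a k ∨ p = botE n i a k)) ∨
     (rungOK n i c k ∧ p = rungE n i a k))}

section basic
variable {n i a k x x' y : ℕ}

theorem dd_pos (hi : 0 < i) : 0 < dd n i := Nat.gcd_pos_of_pos_left n hi
theorem dd_dvd_i : dd n i ∣ i := Nat.gcd_dvd_left i n
theorem dd_dvd_n : dd n i ∣ n := Nat.gcd_dvd_right i n
theorem dm_eq : dd n i * mm n i = n := Nat.mul_div_cancel' (Nat.gcd_dvd_right i n)
theorem mm_dvd : mm n i ∣ n := Nat.div_dvd_of_dvd (Nat.gcd_dvd_right i n)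
theorem mm_pos (hi : 0 < i) (hn : 0 < n) : 0 < mm n i :=
  Nat.div_pos (Nat.le_of_dvd hn (Nat.gcd_dvd_right i n)) (dd_pos hi)

theorem mm_odd (hi : 0 < i) (hodd : n % 2 = 1) : mm n i % 2 = 1 := by
  rcases Nat.lt_or_ge (mm n i % 2) 1 with h | h
  · exfalso
    have h2 : 2 ∣ mm n i := Nat.dvd_of_mod_eq_zero (by omega)
    have h3 : 2 ∣ n := h2.trans mm_dvd
    omega
  · have := Nat.mod_lt (mm n i) (show 0 < 2 by norm_num); omega

theorem mm_ge3 (hi : 0 < i) (hin : i < n) (hodd : n % 2 = 1) : 3 ≤ mm n i := by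
  have h1 : 0 < mm n i := mm_pos hi (by omega)
  have h2 : mm n i % 2 = 1 := mm_odd hi hodd
  have h3 : mm n i ≠ 1 := by
    intro h
    have hdm := @dm_eq n i
    rw [h, mul_one] at hdm
    have : dd n i ≤ i := Nat.le_of_dvd hi dd_dvd_i
    omega
  omega

theorem vv_lt (hn : 0 < n) : vv n i a k < n := Nat.mod_lt _ hn
theorem rr_ge : n ≤ rr n i x := Nat.le_add_right _ _
theorem rr_lt (hn : 0 < n) : rr n i x < 2 * n := by
  have := Nat.mod_lt (x + i - 1) hn; unfold rr; omega

theorem mod_cancel {c : ℕ} (hx : x < n) (hx' : x' < n) (h : (x + c) % n = (x' + c) % n) :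
    x = x' := by
  have h2 : x % n = x' % n := Nat.ModEq.add_right_cancel' c h
  rwa [Nat.mod_eq_of_lt hx, Nat.mod_eq_of_lt hx'] at h2

theorem rr_inj (hi : 0 < i) (hx : x < n) (hx' : x' < n) (h : rr n i x = rr n i x') : x = x' := by
  unfold rr at h
  have e1 : x + i - 1 = x + (i - 1) := by omega
  have e2 : x' + i - 1 = x' + (i - 1) := by omega
  rw [e1, e2] at h
  exact mod_cancel (c := i - 1) hx hx' (Nat.add_left_cancel h)

theorem key1 {j : ℕ} (hn : 0 < n) (hx : x < n) (hj : j < n) :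
    ((x + j) % n + n - x) % n = j := by
  rcases Nat.lt_or_ge (x + j) n with h | h
  · rw [Nat.mod_eq_of_lt h]
    have e : x + j + n - x = j + n := by omega
    rw [e, Nat.add_mod_right, Nat.mod_eq_of_lt hj]
  · have h2 : (x + j) % n = x + j - n := by
      rw [Nat.mod_eq_sub_mod h, Nat.mod_eq_of_lt (by omega)]
    rw [h2]
    have e : x + j - n + n - x = j := by omega
    rw [e, Nat.mod_eq_of_lt hj]

theorem key2 {w j : ℕ} (hn : 0 < n) (hx : x < n) (hw : w < n) (hj : j < n)
    (h : (w + n - x) % n = j) : w = (x + j) % n := by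
  rcases Nat.lt_or_ge (w + n - x) n with h1 | h1
  · have h2 : w + n - x = j := by rwa [Nat.mod_eq_of_lt h1] at h
    have h3 : n ≤ x + j := by omega
    rw [Nat.mod_eq_sub_mod h3, Nat.mod_eq_of_lt (by omega)]
    omega
  · have h2 : (w + n - x) % n = w + n - x - n := by
      rw [Nat.mod_eq_sub_mod h1, Nat.mod_eq_of_lt (by omega)]
    rw [h2] at h
    rw [Nat.mod_eq_of_lt (show x + j < n by omega)]
    omega

theorem succ_mod_cases {m : ℕ} (hk : k < m) :
    ((k+1) % m = k+1 ∧ k+1 < m) ∨ ((k+1) % m = 0 ∧ k+1 = m) := by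
  rcases Nat.lt_or_ge (k+1) m with h | h
  · exact Or.inl ⟨Nat.mod_eq_of_lt h, h⟩
  · have e : k + 1 = m := by omega
    exact Or.inr ⟨by rw [e, Nat.mod_self], e⟩


-- def dd (n i : ℕ) : ℕ := Nat.gcd i n
-- def mm (n i : ℕ) : ℕ := n / Nat.gcd i n
-- def vv (n i a k : ℕ) : ℕ := (a + k * i) % n
-- def rr (n i x : ℕ) : ℕ := n + (x + i - 1) % n

theorem n_dvd_mm_mul_i (n i : ℕ) : n ∣ mm n i * i := by
  have hdm : dd n i * mm n i = n := Nat.mul_div_cancel' (Nat.gcd_dvd_right i n)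
  obtain ⟨e, he⟩ : dd n i ∣ i := Nat.gcd_dvd_left i n
  set D := dd n i
  set M := mm n i
  refine ⟨e, ?_⟩
  rw [he, ← hdm]
  ring

theorem vv_shift {n i a k : ℕ} (hk : k < mm n i) :
    vv n i a ((k+1) % mm n i) = (vv n i a k + i) % n := by
  unfold vv
  rw [Nat.mod_add_mod]
  rcases Nat.lt_or_ge (k+1) (mm n i) with h | h
  · rw [Nat.mod_eq_of_lt h]; ring_nf
  · have e : k + 1 = mm n i := by omega
    rw [e, Nat.mod_self]
    obtain ⟨t, ht⟩ := n_dvd_mm_mul_i n i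
    have e2 : a + k * i + i = a + mm n i * i := by rw [← e]; ring
    rw [e2, ht, Nat.mul_comm, Nat.add_mul_mod_self_left]
    simp

theorem vv_inj {n i a a' k k' : ℕ} (hi : 0 < i) (hn : 0 < n)
    (ha : a < dd n i) (ha' : a' < dd n i) (hk : k < mm n i) (hk' : k' < mm n i)
    (h : vv n i a k = vv n i a' k') : a = a' ∧ k = k' := by
  obtain ⟨e, he⟩ : dd n i ∣ i := Nat.gcd_dvd_left i n
  set D := dd n i with hD
  set M := mm n i with hM
  have hmod : a + k * i ≡ a' + k' * i [MOD n] := h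
  have haa : a = a' := by
    have h2 : a + k * i ≡ a' + k' * i [MOD D] :=
      hmod.of_dvd (Nat.gcd_dvd_right i n)
    have h3 : (a + k * i) % D = (a' + k' * i) % D := h2
    rw [he] at h3
    have e1 : a + k * (D * e) = a + (k * e) * D := by ring
    have e2 : a' + k' * (D * e) = a' + (k' * e) * D := by ring
    rw [e1, e2, Nat.add_mul_mod_self_right, Nat.add_mul_mod_self_right] at h3
    rwa [Nat.mod_eq_of_lt ha, Nat.mod_eq_of_lt ha'] at h3
  subst haa
  have h4 : k * i ≡ k' * i [MOD n] := Nat.ModEq.add_left_cancel' a hmod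
  have h5 : k ≡ k' [MOD n / Nat.gcd n i] := Nat.ModEq.cancel_right_div_gcd hn h4
  rw [Nat.gcd_comm] at h5
  have h6 : k % M = k' % M := h5
  rw [Nat.mod_eq_of_lt hk, Nat.mod_eq_of_lt hk'] at h6
  exact ⟨rfl, h6⟩

theorem vv_surj {n i x : ℕ} (hi : 0 < i) (hin : i < n) (hx : x < n) :
    ∃ a k, a < dd n i ∧ k < mm n i ∧ vv n i a k = x := by
  have hn : 0 < n := by omega
  have hd0 : 0 < dd n i := Nat.gcd_pos_of_pos_left n hi
  have hm0 : 0 < mm n i :=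
    Nat.div_pos (Nat.le_of_dvd hn (Nat.gcd_dvd_right i n)) hd0
  haveI : NeZero (mm n i) := ⟨by omega⟩
  have hco : Nat.Coprime (i / dd n i) (mm n i) := Nat.coprime_div_gcd_div_gcd hd0
  set m := mm n i
  set d := dd n i with hd
  set i' := i / d with hi'
  have hunit : IsUnit ((i' : ZMod m)) := (ZMod.isUnit_iff_coprime i' m).mpr hco
  set z : ZMod m := ((x / d : ℕ) : ZMod m) * ((i' : ZMod m))⁻¹ with hz
  refine ⟨x % d, z.val, Nat.mod_lt _ hd0, ZMod.val_lt z, ?_⟩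
  have hcast : ((z.val * i' : ℕ) : ZMod m) = ((x / d : ℕ) : ZMod m) := by
    push_cast
    rw [ZMod.natCast_val, ZMod.cast_id, hz, mul_assoc, ZMod.inv_mul_of_unit _ hunit, mul_one]
  have hmeq : z.val * i' ≡ x / d [MOD m] := (ZMod.natCast_eq_natCast_iff _ _ _).mp hcast
  have hscaled : d * (z.val * i') ≡ d * (x / d) [MOD d * m] := hmeq.mul_left' d
  have hdm : d * m = n := Nat.mul_div_cancel' (Nat.gcd_dvd_right i n)
  have hdi : d * i' = i := Nat.mul_div_cancel' (Nat.gcd_dvd_left i n)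
  rw [hdm] at hscaled
  have e1 : d * (z.val * i') = z.val * i := by rw [← hdi]; ring
  rw [e1] at hscaled
  have hma : x % d + d * (x / d) = x := Nat.mod_add_div x d
  have hfin : x % d + z.val * i ≡ x [MOD n] := by
    calc x % d + z.val * i ≡ x % d + d * (x / d) [MOD n] := (hscaled).add_left _
    _ = x := hma
  unfold vv
  have : (x % d + z.val * i) % n = x % n := hfin
  rw [Nat.mod_eq_of_lt hx] at this
  exact this

theorem rr_surj {n i y : ℕ} (hi : 0 < i) (hin : i < n) (hy1 : n ≤ y) (hy2 : y < 2 * n) :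
    ∃ x, x < n ∧ rr n i x = y := by
  have hn : 0 < n := by omega
  refine ⟨(y - n + (n + 1 - i)) % n, Nat.mod_lt _ hn, ?_⟩
  unfold rr
  have e1 : (y - n + (n + 1 - i)) % n + i - 1 = (y - n + (n + 1 - i)) % n + (i - 1) := by omega
  rw [e1, Nat.mod_add_mod]
  have e2 : y - n + (n + 1 - i) + (i - 1) = y - n + n := by omega
  rw [e2, Nat.add_mod_right, Nat.mod_eq_of_lt (by omega)]
  omega

end basic

theorem mem_pair {s t w : ℕ} : w ∈ ({s, t} : Finset ℕ) ↔ w = s ∨ w = t := by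
  simp [Finset.mem_insert, Finset.mem_singleton]

theorem succ2_absurd {m k k' : ℕ} (hm : 3 ≤ m) (hk : k < m) (hk' : k' < m)
    (h1 : (k+1) % m = k') (h2 : (k'+1) % m = k) : False := by
  rcases succ_mod_cases (m := m) hk with ⟨e1, f1⟩ | ⟨e1, f1⟩ <;>
    rcases succ_mod_cases (m := m) hk' with ⟨e2, f2⟩ | ⟨e2, f2⟩ <;> omega

theorem succ_mod_lt {m k : ℕ} (hm : 0 < m) : (k+1) % m < m := Nat.mod_lt _ hm

section geom
variable {n i a a' k k' : ℕ} (hi : 0 < i) (hin : i < n)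
  (ha : a < dd n i) (ha' : a' < dd n i) (hk : k < mm n i) (hk' : k' < mm n i)

include hi hin ha ha' hk hk'

theorem Rv_inj (h : rr n i (vv n i a k) = rr n i (vv n i a' k')) : a = a' ∧ k = k' :=
  vv_inj hi (by omega) ha ha' hk hk' (rr_inj hi (vv_lt (by omega)) (vv_lt (by omega)) h)

theorem top_meet (h : ¬ Disjoint (topE n i a k) (topE n i a' k')) :
    a = a' ∧ (k = k' ∨ (k+1) % mm n i = k' ∨ k = (k'+1) % mm n i) := by
  have hn : 0 < n := by omega
  have hm : 0 < mm n i := mm_pos hi hn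
  obtain ⟨w, hw1, hw2⟩ := Finset.not_disjoint_iff.mp h
  rw [topE, mem_pair] at hw1 hw2
  have l1 : (k+1) % mm n i < mm n i := succ_mod_lt hm
  have l2 : (k'+1) % mm n i < mm n i := succ_mod_lt hm
  rcases hw1 with rfl | rfl <;> rcases hw2 with h2 | h2
  · obtain ⟨e1, e2⟩ := vv_inj hi hn ha ha' hk hk' h2; exact ⟨e1, Or.inl e2⟩
  · obtain ⟨e1, e2⟩ := vv_inj hi hn ha ha' hk l2 h2; exact ⟨e1, Or.inr (Or.inr e2)⟩
  · obtain ⟨e1, e2⟩ := vv_inj hi hn ha ha' l1 hk' h2; exact ⟨e1, Or.inr (Or.inl e2)⟩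
  · obtain ⟨e1, e2⟩ := vv_inj hi hn ha ha' l1 l2 h2
    refine ⟨e1, Or.inl ?_⟩
    rcases succ_mod_cases (m := mm n i) hk with ⟨f1, g1⟩ | ⟨f1, g1⟩ <;>
      rcases succ_mod_cases (m := mm n i) hk' with ⟨f2, g2⟩ | ⟨f2, g2⟩ <;> omega

theorem bot_meet (h : ¬ Disjoint (botE n i a k) (botE n i a' k')) :
    a = a' ∧ (k = k' ∨ (k+1) % mm n i = k' ∨ k = (k'+1) % mm n i) := by
  have hn : 0 < n := by omega
  have hm : 0 < mm n i := mm_pos hi hn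
  obtain ⟨w, hw1, hw2⟩ := Finset.not_disjoint_iff.mp h
  rw [botE, mem_pair] at hw1 hw2
  have l1 : (k+1) % mm n i < mm n i := succ_mod_lt hm
  have l2 : (k'+1) % mm n i < mm n i := succ_mod_lt hm
  rcases hw1 with rfl | rfl <;> rcases hw2 with h2 | h2
  · obtain ⟨e1, e2⟩ := Rv_inj hi hin ha ha' hk hk' h2; exact ⟨e1, Or.inl e2⟩
  · obtain ⟨e1, e2⟩ := Rv_inj hi hin ha ha' hk l2 h2; exact ⟨e1, Or.inr (Or.inr e2)⟩
  · obtain ⟨e1, e2⟩ := Rv_inj hi hin ha ha' l1 hk' h2; exact ⟨e1, Or.inr (Or.inl e2)⟩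
  · obtain ⟨e1, e2⟩ := Rv_inj hi hin ha ha' l1 l2 h2
    refine ⟨e1, Or.inl ?_⟩
    rcases succ_mod_cases (m := mm n i) hk with ⟨f1, g1⟩ | ⟨f1, g1⟩ <;>
      rcases succ_mod_cases (m := mm n i) hk' with ⟨f2, g2⟩ | ⟨f2, g2⟩ <;> omega

theorem rung_meet (h : ¬ Disjoint (rungE n i a k) (rungE n i a' k')) :
    a = a' ∧ k = k' := by
  have hn : 0 < n := by omega
  obtain ⟨w, hw1, hw2⟩ := Finset.not_disjoint_iff.mp h
  rw [rungE, mem_pair] at hw1 hw2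
  rcases hw1 with rfl | rfl <;> rcases hw2 with h2 | h2
  · exact vv_inj hi hn ha ha' hk hk' h2
  · exact absurd h2 (by have := vv_lt (n := n) (i := i) (a := a) (k := k) hn
                        have := rr_ge (n := n) (i := i) (x := vv n i a' k'); omega)
  · exact absurd h2 (by have := vv_lt (n := n) (i := i) (a := a') (k := k') hn
                        have := rr_ge (n := n) (i := i) (x := vv n i a k); omega)
  · exact Rv_inj hi hin ha ha' hk hk' h2

theorem top_rung_meet (h : ¬ Disjoint (topE n i a k) (rungE n i a' k')) :
    a = a' ∧ (k' = k ∨ k' = (k+1) % mm n i) := by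
  have hn : 0 < n := by omega
  have hm : 0 < mm n i := mm_pos hi hn
  obtain ⟨w, hw1, hw2⟩ := Finset.not_disjoint_iff.mp h
  rw [topE, mem_pair] at hw1
  rw [rungE, mem_pair] at hw2
  have l1 : (k+1) % mm n i < mm n i := succ_mod_lt hm
  rcases hw1 with rfl | rfl <;> rcases hw2 with h2 | h2
  · obtain ⟨e1, e2⟩ := vv_inj hi hn ha ha' hk hk' h2; exact ⟨e1, Or.inl e2.symm⟩
  · exact absurd h2 (by have := vv_lt (n := n) (i := i) (a := a) (k := k) hn
                        have := rr_ge (n := n) (i := i) (x := vv n i a' k'); omega)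
  · obtain ⟨e1, e2⟩ := vv_inj hi hn ha ha' l1 hk' h2; exact ⟨e1, Or.inr e2.symm⟩
  · exact absurd h2 (by have := vv_lt (n := n) (i := i) (a := a) (k := (k+1) % mm n i) hn
                        have := rr_ge (n := n) (i := i) (x := vv n i a' k'); omega)

theorem bot_rung_meet (h : ¬ Disjoint (botE n i a k) (rungE n i a' k')) :
    a = a' ∧ (k' = k ∨ k' = (k+1) % mm n i) := by
  have hn : 0 < n := by omega
  have hm : 0 < mm n i := mm_pos hi hn
  obtain ⟨w, hw1, hw2⟩ := Finset.not_disjoint_iff.mp h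
  rw [botE, mem_pair] at hw1
  rw [rungE, mem_pair] at hw2
  have l1 : (k+1) % mm n i < mm n i := succ_mod_lt hm
  rcases hw1 with rfl | rfl <;> rcases hw2 with h2 | h2
  · exact absurd h2.symm (by have := vv_lt (n := n) (i := i) (a := a') (k := k') hn
                             have := rr_ge (n := n) (i := i) (x := vv n i a k); omega)
  · obtain ⟨e1, e2⟩ := Rv_inj hi hin ha ha' hk hk' h2; exact ⟨e1, Or.inl e2.symm⟩
  · exact absurd h2.symm (by have := vv_lt (n := n) (i := i) (a := a') (k := k') hn
                             have := rr_ge (n := n) (i := i) (x := vv n i a ((k+1) % mm n i)); omega)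
  · obtain ⟨e1, e2⟩ := Rv_inj hi hin ha ha' l1 hk' h2; exact ⟨e1, Or.inr e2.symm⟩

theorem top_bot_disj : Disjoint (topE n i a k) (botE n i a' k') := by
  have hn : 0 < n := by omega
  rw [Finset.disjoint_left]
  intro w hw1 hw2
  rw [topE, mem_pair] at hw1
  rw [botE, mem_pair] at hw2
  have b1 := rr_ge (n := n) (i := i) (x := vv n i a' k')
  have b2 := rr_ge (n := n) (i := i) (x := vv n i a' ((k'+1) % mm n i))
  have c1 := vv_lt (n := n) (i := i) (a := a) (k := k) hn
  have c2 := vv_lt (n := n) (i := i) (a := a) (k := (k+1) % mm n i) hn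
  omega

theorem topE_eq (hm3 : 3 ≤ mm n i) (h : topE n i a k = topE n i a' k') : a = a' ∧ k = k' := by
  have hnd : ¬ Disjoint (topE n i a k) (topE n i a' k') := by
    rw [Finset.not_disjoint_iff]
    exact ⟨vv n i a k, by rw [topE, mem_pair]; left; rfl, by rw [← h, topE, mem_pair]; left; rfl⟩
  obtain ⟨e1, e2⟩ := top_meet hi hin ha ha' hk hk' hnd
  refine ⟨e1, ?_⟩
  rcases e2 with e2 | e2 | e2
  · exact e2
  · -- (k+1)%m = k'; get more info: vv a k ∈ topE a' k'
    have hmem : vv n i a k ∈ topE n i a' k' := by rw [← h, topE, mem_pair]; left; rfl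
    rw [topE, mem_pair] at hmem
    have hn : 0 < n := by omega
    have hm : 0 < mm n i := by omega
    rcases hmem with h3 | h3
    · exact (vv_inj hi hn ha ha' hk hk' h3).2
    · obtain ⟨_, e3⟩ := vv_inj hi hn ha ha' hk (succ_mod_lt hm) h3
      exact (succ2_absurd hm3 hk' hk e3.symm e2).elim
  · have hmem : vv n i a' k' ∈ topE n i a k := by rw [h, topE, mem_pair]; left; rfl
    rw [topE, mem_pair] at hmem
    have hn : 0 < n := by omega
    have hm : 0 < mm n i := by omega
    rcases hmem with h3 | h3
    · exact (vv_inj hi hn ha' ha hk' hk h3).2.symm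
    · obtain ⟨_, e3⟩ := vv_inj hi hn ha' ha hk' (succ_mod_lt hm) h3
      exact (succ2_absurd hm3 hk hk' e3.symm e2.symm).elim

theorem botE_eq (hm3 : 3 ≤ mm n i) (h : botE n i a k = botE n i a' k') : a = a' ∧ k = k' := by
  have hnd : ¬ Disjoint (botE n i a k) (botE n i a' k') := by
    rw [Finset.not_disjoint_iff]
    exact ⟨rr n i (vv n i a k), by rw [botE, mem_pair]; left; rfl,
      by rw [← h, botE, mem_pair]; left; rfl⟩
  obtain ⟨e1, e2⟩ := bot_meet hi hin ha ha' hk hk' hnd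
  refine ⟨e1, ?_⟩
  rcases e2 with e2 | e2 | e2
  · exact e2
  · have hmem : rr n i (vv n i a k) ∈ botE n i a' k' := by rw [← h, botE, mem_pair]; left; rfl
    rw [botE, mem_pair] at hmem
    have hn : 0 < n := by omega
    have hm : 0 < mm n i := by omega
    rcases hmem with h3 | h3
    · exact (Rv_inj hi hin ha ha' hk hk' h3).2
    · obtain ⟨_, e3⟩ := Rv_inj hi hin ha ha' hk (succ_mod_lt hm) h3
      exact (succ2_absurd hm3 hk' hk e3.symm e2).elim
  · have hmem : rr n i (vv n i a' k') ∈ botE n i a k := by rw [h, botE, mem_pair]; left; rfl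
    rw [botE, mem_pair] at hmem
    have hn : 0 < n := by omega
    have hm : 0 < mm n i := by omega
    rcases hmem with h3 | h3
    · exact (Rv_inj hi hin ha' ha hk' hk h3).2.symm
    · obtain ⟨_, e3⟩ := Rv_inj hi hin ha' ha hk' (succ_mod_lt hm) h3
      exact (succ2_absurd hm3 hk hk' e3.symm e2.symm).elim

theorem rungE_eq (h : rungE n i a k = rungE n i a' k') : a = a' ∧ k = k' := by
  have hn : 0 < n := by omega
  have hmem : vv n i a k ∈ rungE n i a' k' := by rw [← h, rungE, mem_pair]; left; rfl
  rw [rungE, mem_pair] at hmem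
  rcases hmem with h3 | h3
  · exact vv_inj hi hn ha ha' hk hk' h3
  · exact absurd h3 (by have := vv_lt (n := n) (i := i) (a := a) (k := k) hn
                        have := rr_ge (n := n) (i := i) (x := vv n i a' k'); omega)

theorem topE_ne_botE : topE n i a k ≠ botE n i a' k' := by
  intro h
  have hn : 0 < n := by omega
  have hmem : vv n i a k ∈ botE n i a' k' := by rw [← h, topE, mem_pair]; left; rfl
  rw [botE, mem_pair] at hmem
  have := vv_lt (n := n) (i := i) (a := a) (k := k) hn
  have := rr_ge (n := n) (i := i) (x := vv n i a' k')
  have := rr_ge (n := n) (i := i) (x := vv n i a' ((k'+1) % mm n i))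
  omega

theorem topE_ne_rungE : topE n i a k ≠ rungE n i a' k' := by
  intro h
  have hn : 0 < n := by omega
  have hm : 0 < mm n i := mm_pos hi hn
  have hmem : rr n i (vv n i a' k') ∈ topE n i a k := by rw [h, rungE, mem_pair]; right; rfl
  rw [topE, mem_pair] at hmem
  have := rr_ge (n := n) (i := i) (x := vv n i a' k')
  have := vv_lt (n := n) (i := i) (a := a) (k := k) hn
  have := vv_lt (n := n) (i := i) (a := a) (k := (k+1) % mm n i) hn
  omega

theorem botE_ne_rungE : botE n i a k ≠ rungE n i a' k' := by
  intro h
  have hn : 0 < n := by omega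
  have hmem : vv n i a' k' ∈ botE n i a k := by rw [h, rungE, mem_pair]; left; rfl
  rw [botE, mem_pair] at hmem
  have := vv_lt (n := n) (i := i) (a := a') (k := k') hn
  have := rr_ge (n := n) (i := i) (x := vv n i a k)
  have := rr_ge (n := n) (i := i) (x := vv n i a ((k+1) % mm n i))
  omega

omit ha ha' hk hk'

include hi hin in
theorem add_i_ne {x : ℕ} (hx : x < n) : (x + i) % n ≠ x := by
  intro h
  have h2 : (x + i) % n = (x + 0) % n := by rw [h, Nat.add_zero, Nat.mod_eq_of_lt hx]
  have h3 : i ≡ 0 [MOD n] := Nat.ModEq.add_left_cancel' x h2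
  have h4 : i % n = 0 % n := h3
  rw [Nat.mod_eq_of_lt hin, Nat.zero_mod] at h4
  omega

omit hin

include hk in
theorem topE_mem_AA (hin : i < n) : topE n i a k ∈ AA n i := by
  have hn : 0 < n := by omega
  refine ⟨vv n i a k, vv n i a ((k+1) % mm n i), vv_lt hn, vv_lt hn, ?_, Or.inl ?_, rfl⟩
  · rw [vv_shift hk]
    exact fun h => add_i_ne hi hin (vv_lt hn) h.symm
  · rw [vv_shift hk]
    exact key1 hn (vv_lt hn) hin

include hk in
theorem botE_mem_BB (hin : i < n) : botE n i a k ∈ BB n i := by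
  have hn : 0 < n := by omega
  set u := vv n i a k with hu
  have hul : u < n := vv_lt hn
  set s := (u + i - 1) % n with hs
  have hsl : s < n := Nat.mod_lt _ hn
  have hshift : vv n i a ((k+1) % mm n i) = (u + i) % n := vv_shift hk
  have ht : (vv n i a ((k+1) % mm n i) + i - 1) % n = (s + i) % n := by
    rw [hshift]
    have e1 : (u + i) % n + i - 1 = (u + i) % n + (i - 1) := by omega
    rw [e1, Nat.mod_add_mod]
    have e2 : u + i + (i - 1) = (u + i - 1) + i := by omega
    rw [e2, ← Nat.mod_add_mod, ← hs]
  refine ⟨rr n i u, rr n i (vv n i a ((k+1) % mm n i)), rr_ge, rr_lt hn, rr_ge, rr_lt hn, ?_, Or.inl ?_, rfl⟩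
  · unfold rr
    rw [ht, ← hs]
    have := add_i_ne hi hin hsl
    omega
  · unfold rr
    rw [ht, ← hs]
    have e3 : n + (s + i) % n + n - (n + s) = (s + i) % n + n - s := by
      have := Nat.mod_lt (s + i) (y := n) hn; omega
    rw [e3]
    exact key1 hn hsl hin

include hk in
theorem rungE_mem_DD (hin : i < n) : rungE n i a k ∈ DD n (i - 1) := by
  have hn : 0 < n := by omega
  set x := vv n i a k with hx
  have hxl : x < n := vv_lt hn
  refine ⟨x, rr n i x, hxl, rr_ge, rr_lt hn, ?_, rfl⟩
  unfold rr
  have e1 : x + i - 1 = x + (i - 1) := by omega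
  have e2 : n + (x + (i - 1)) % n - x = (x + (i - 1)) % n + n - x := by
    have := Nat.mod_lt (x + (i - 1)) (y := n) hn; omega
  rw [e1, e2]
  exact key1 hn hxl (by omega)

include hin in
theorem AA_sub {p : Finset ℕ} (hp : p ∈ AA n i) :
    ∃ a k, a < dd n i ∧ k < mm n i ∧ p = topE n i a k := by
  have hn : 0 < n := by omega
  obtain ⟨x, y, hx, hy, hne, hcond, rfl⟩ := hp
  rcases hcond with hc | hc
  · have hyx : y = (x + i) % n := key2 hn hx hy hin hc
    obtain ⟨a, k, ha2, hk2, hv⟩ := vv_surj hi hin hx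
    refine ⟨a, k, ha2, hk2, ?_⟩
    rw [topE, vv_shift hk2, hv, ← hyx]
  · have hxy : x = (y + i) % n := key2 hn hy hx hin hc
    obtain ⟨a, k, ha2, hk2, hv⟩ := vv_surj hi hin hy
    refine ⟨a, k, ha2, hk2, ?_⟩
    rw [topE, vv_shift hk2, hv, ← hxy, Finset.pair_comm]

include hin in
theorem DD_sub {p : Finset ℕ} (hp : p ∈ DD n (i - 1)) :
    ∃ a k, a < dd n i ∧ k < mm n i ∧ p = rungE n i a k := by
  have hn : 0 < n := by omega
  obtain ⟨x, y, hx, hy1, hy2, hcond, rfl⟩ := hp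
  have hw : y - n < n := by omega
  have e1 : y - x = (y - n) + n - x := by omega
  rw [e1] at hcond
  have h2 : y - n = (x + (i - 1)) % n := key2 hn hx hw (by omega) hcond
  obtain ⟨a, k, ha2, hk2, hv⟩ := vv_surj hi hin hx
  refine ⟨a, k, ha2, hk2, ?_⟩
  rw [rungE, hv]
  unfold rr
  have e2 : x + i - 1 = x + (i - 1) := by omega
  have e3 : n + (y - n) = y := by omega
  rw [e2, ← h2, e3]

include hin in
theorem BB_sub {p : Finset ℕ} (hp : p ∈ BB n i) :
    ∃ a k, a < dd n i ∧ k < mm n i ∧ p = botE n i a k := by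
  have hn : 0 < n := by omega
  obtain ⟨x, y, hx1, hx2, hy1, hy2, hne, hcond, rfl⟩ := hp
  have main : ∀ x' y', n ≤ x' → x' < 2*n → n ≤ y' → y' < 2*n →
      (y' + n - x') % n = i → ∃ a k, a < dd n i ∧ k < mm n i ∧
        ({x', y'} : Finset ℕ) = botE n i a k := by
    intro x' y' hx1' hx2' hy1' hy2' hc
    set u := x' - n with hu
    set w := y' - n with hwdef
    have hul : u < n := by omega
    have hwl : w < n := by omega
    have e1 : y' + n - x' = w + n - u := by omega
    rw [e1] at hc
    have hw2 : w = (u + i) % n := key2 hn hul hwl hin hc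
    set s := (u + (n + 1 - i)) % n with hs
    have hsl : s < n := Nat.mod_lt _ hn
    have hsu : (s + (i - 1)) % n = u := by
      rw [hs, Nat.mod_add_mod]
      have e2 : u + (n + 1 - i) + (i - 1) = u + n := by omega
      rw [e2, Nat.add_mod_right, Nat.mod_eq_of_lt hul]
    obtain ⟨a, k, ha2, hk2, hv⟩ := vv_surj hi hin hsl
    refine ⟨a, k, ha2, hk2, ?_⟩
    rw [botE, vv_shift hk2, hv]
    unfold rr
    have e3 : s + i - 1 = s + (i - 1) := by omega
    have e4 : (s + i) % n + i - 1 = (s + i) % n + (i - 1) := by omega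
    rw [e3, e4, hsu, Nat.mod_add_mod]
    have e5 : s + i + (i - 1) = (s + (i - 1)) + i := by omega
    rw [e5, ← Nat.mod_add_mod, hsu, ← hw2]
    have ex : n + u = x' := by omega
    have ey : n + w = y' := by omega
    rw [ex, ey]
  rcases hcond with hc | hc
  · exact main x y hx1 hx2 hy1 hy2 hc
  · obtain ⟨a, k, ha2, hk2, he⟩ := main y x hy1 hy2 hx1 hx2 hc
    exact ⟨a, k, ha2, hk2, by rw [Finset.pair_comm]; exact he⟩

section main
variable {c c' : ℕ}

include hi in
theorem FF_oneFactor (hin : i < n) (hodd : n % 2 = 1)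
    (hc : c = 1 ∨ c = 2 ∨ c = 3) : IsOneFactor n (FF n i c) := by
  have hn : 0 < n := by omega
  have hm3 : 3 ≤ mm n i := mm_ge3 hi hin hodd
  have hmo : mm n i % 2 = 1 := mm_odd hi hodd
  have hm : 0 < mm n i := by omega
  refine ⟨?_, ?_, ?_⟩
  · -- cards and bounds
    rintro p ⟨a, ha, k, hk, ⟨htop, hp | hp⟩ | ⟨hrng, hp⟩⟩ <;> subst hp
    · refine ⟨Finset.card_pair ?_, ?_⟩
      · intro h
        obtain ⟨-, e⟩ := vv_inj hi hn ha ha hk (succ_mod_lt hm) h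
        rcases succ_mod_cases (m := mm n i) hk with ⟨f, g⟩ | ⟨f, g⟩ <;> omega
      · intro x hx
        rw [topE, mem_pair] at hx
        rcases hx with rfl | rfl
        · have := vv_lt (n := n) (i := i) (a := a) (k := k) hn; omega
        · have := vv_lt (n := n) (i := i) (a := a) (k := (k+1) % mm n i) hn; omega
    · refine ⟨Finset.card_pair ?_, ?_⟩
      · intro h
        obtain ⟨-, e⟩ := Rv_inj hi hin ha ha hk (succ_mod_lt hm) h
        rcases succ_mod_cases (m := mm n i) hk with ⟨f, g⟩ | ⟨f, g⟩ <;> omega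
      · intro x hx
        rw [botE, mem_pair] at hx
        rcases hx with rfl | rfl
        · exact rr_lt hn
        · exact rr_lt hn
    · refine ⟨Finset.card_pair ?_, ?_⟩
      · have h1 := vv_lt (n := n) (i := i) (a := a) (k := k) hn
        have h2 := rr_ge (n := n) (i := i) (x := vv n i a k)
        omega
      · intro x hx
        rw [rungE, mem_pair] at hx
        rcases hx with rfl | rfl
        · have := vv_lt (n := n) (i := i) (a := a) (k := k) hn; omega
        · exact rr_lt hn
  · -- pairwise disjoint
    rintro p ⟨a, ha, k, hk, hp⟩ q ⟨b, hb, l, hl, hq⟩ hne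
    by_contra hdis
    rcases hp with ⟨ht1, hp | hp⟩ | ⟨hr1, hp⟩ <;>
      rcases hq with ⟨ht2, hq | hq⟩ | ⟨hr2, hq⟩ <;> subst hp <;> subst hq
    · obtain ⟨e1, e2⟩ := top_meet hi hin ha hb hk hl hdis
      have keq : k = l := by
        rcases hc with rfl | rfl | rfl <;> norm_num [topOK] at ht1 ht2 <;>
          rcases succ_mod_cases (m := mm n i) hk with ⟨f1, g1⟩ | ⟨f1, g1⟩ <;>
          rcases succ_mod_cases (m := mm n i) hl with ⟨f2, g2⟩ | ⟨f2, g2⟩ <;> omega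
      exact hne (by rw [e1, keq])
    · exact hdis (top_bot_disj hi hin ha hb hk hl)
    · obtain ⟨e1, e2⟩ := top_rung_meet hi hin ha hb hk hl hdis
      rcases hc with rfl | rfl | rfl <;> norm_num [topOK, rungOK] at ht1 hr2 <;>
        rcases succ_mod_cases (m := mm n i) hk with ⟨f1, g1⟩ | ⟨f1, g1⟩ <;> omega
    · exact hdis (top_bot_disj hi hin hb ha hl hk).symm
    · obtain ⟨e1, e2⟩ := bot_meet hi hin ha hb hk hl hdis
      have keq : k = l := by
        rcases hc with rfl | rfl | rfl <;> norm_num [topOK] at ht1 ht2 <;>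
          rcases succ_mod_cases (m := mm n i) hk with ⟨f1, g1⟩ | ⟨f1, g1⟩ <;>
          rcases succ_mod_cases (m := mm n i) hl with ⟨f2, g2⟩ | ⟨f2, g2⟩ <;> omega
      exact hne (by rw [e1, keq])
    · obtain ⟨e1, e2⟩ := bot_rung_meet hi hin ha hb hk hl hdis
      rcases hc with rfl | rfl | rfl <;> norm_num [topOK, rungOK] at ht1 hr2 <;>
        rcases succ_mod_cases (m := mm n i) hk with ⟨f1, g1⟩ | ⟨f1, g1⟩ <;> omega
    · obtain ⟨e1, e2⟩ := top_rung_meet hi hin hb ha hl hk (fun h => hdis h.symm)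
      rcases hc with rfl | rfl | rfl <;> norm_num [topOK, rungOK] at ht2 hr1 <;>
        rcases succ_mod_cases (m := mm n i) hl with ⟨f1, g1⟩ | ⟨f1, g1⟩ <;> omega
    · obtain ⟨e1, e2⟩ := bot_rung_meet hi hin hb ha hl hk (fun h => hdis h.symm)
      rcases hc with rfl | rfl | rfl <;> norm_num [topOK, rungOK] at ht2 hr1 <;>
        rcases succ_mod_cases (m := mm n i) hl with ⟨f1, g1⟩ | ⟨f1, g1⟩ <;> omega
    · obtain ⟨e1, e2⟩ := rung_meet hi hin ha hb hk hl hdis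
      exact hne (by rw [e1, e2])
  · -- cover
    intro w hw
    rcases Nat.lt_or_ge w n with hwn | hwn
    · obtain ⟨a, k, ha, hk, hv⟩ := vv_surj hi hin hwn
      subst hv
      rcases hc with rfl | rfl | rfl
      · by_cases h1 : k = mm n i - 1
        · exact ⟨rungE n i a k, ⟨a, ha, k, hk, Or.inr ⟨by unfold rungOK; norm_num; omega, rfl⟩⟩,
            by rw [rungE, mem_pair]; left; rfl⟩
        · by_cases h2 : k % 2 = 0
          · exact ⟨topE n i a k, ⟨a, ha, k, hk, Or.inl ⟨by unfold topOK; norm_num; omega, Or.inl rfl⟩⟩,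
              by rw [topE, mem_pair]; left; rfl⟩
          · refine ⟨topE n i a (k-1), ⟨a, ha, k-1, by omega,
              Or.inl ⟨by unfold topOK; norm_num; omega, Or.inl rfl⟩⟩, ?_⟩
            rw [topE, mem_pair]; right
            have e : k - 1 + 1 = k := by omega
            rw [e, Nat.mod_eq_of_lt hk]
      · by_cases h1 : k = 0
        · exact ⟨rungE n i a k, ⟨a, ha, k, hk, Or.inr ⟨by unfold rungOK; norm_num; omega, rfl⟩⟩,
            by rw [rungE, mem_pair]; left; rfl⟩
        · by_cases h2 : k % 2 = 1
          · exact ⟨topE n i a k, ⟨a, ha, k, hk, Or.inl ⟨by unfold topOK; norm_num; omega, Or.inl rfl⟩⟩,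
              by rw [topE, mem_pair]; left; rfl⟩
          · refine ⟨topE n i a (k-1), ⟨a, ha, k-1, by omega,
              Or.inl ⟨by unfold topOK; norm_num; omega, Or.inl rfl⟩⟩, ?_⟩
            rw [topE, mem_pair]; right
            have e : k - 1 + 1 = k := by omega
            rw [e, Nat.mod_eq_of_lt hk]
      · by_cases h1 : k = mm n i - 1
        · subst h1
          exact ⟨topE n i a (mm n i - 1), ⟨a, ha, mm n i - 1, by omega,
            Or.inl ⟨by unfold topOK; norm_num, Or.inl rfl⟩⟩,
            by rw [topE, mem_pair]; left; rfl⟩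
        · by_cases h2 : k = 0
          · subst h2
            refine ⟨topE n i a (mm n i - 1), ⟨a, ha, mm n i - 1, by omega,
              Or.inl ⟨by unfold topOK; norm_num, Or.inl rfl⟩⟩, ?_⟩
            rw [topE, mem_pair]; right
            have e : mm n i - 1 + 1 = mm n i := by omega
            rw [e, Nat.mod_self]
          · exact ⟨rungE n i a k, ⟨a, ha, k, hk, Or.inr ⟨by unfold rungOK; norm_num; omega, rfl⟩⟩,
              by rw [rungE, mem_pair]; left; rfl⟩
    · obtain ⟨x, hxlt, hx⟩ := rr_surj hi hin hwn hw
      obtain ⟨a, k, ha, hk, hv⟩ := vv_surj hi hin hxlt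
      subst hv
      subst hx
      rcases hc with rfl | rfl | rfl
      · by_cases h1 : k = mm n i - 1
        · exact ⟨rungE n i a k, ⟨a, ha, k, hk, Or.inr ⟨by unfold rungOK; norm_num; omega, rfl⟩⟩,
            by rw [rungE, mem_pair]; right; rfl⟩
        · by_cases h2 : k % 2 = 0
          · exact ⟨botE n i a k, ⟨a, ha, k, hk, Or.inl ⟨by unfold topOK; norm_num; omega, Or.inr rfl⟩⟩,
              by rw [botE, mem_pair]; left; rfl⟩
          · refine ⟨botE n i a (k-1), ⟨a, ha, k-1, by omega,
              Or.inl ⟨by unfold topOK; norm_num; omega, Or.inr rfl⟩⟩, ?_⟩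
            rw [botE, mem_pair]; right
            have e : k - 1 + 1 = k := by omega
            rw [e, Nat.mod_eq_of_lt hk]
      · by_cases h1 : k = 0
        · exact ⟨rungE n i a k, ⟨a, ha, k, hk, Or.inr ⟨by unfold rungOK; norm_num; omega, rfl⟩⟩,
            by rw [rungE, mem_pair]; right; rfl⟩
        · by_cases h2 : k % 2 = 1
          · exact ⟨botE n i a k, ⟨a, ha, k, hk, Or.inl ⟨by unfold topOK; norm_num; omega, Or.inr rfl⟩⟩,
              by rw [botE, mem_pair]; left; rfl⟩
          · refine ⟨botE n i a (k-1), ⟨a, ha, k-1, by omega,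
              Or.inl ⟨by unfold topOK; norm_num; omega, Or.inr rfl⟩⟩, ?_⟩
            rw [botE, mem_pair]; right
            have e : k - 1 + 1 = k := by omega
            rw [e, Nat.mod_eq_of_lt hk]
      · by_cases h1 : k = mm n i - 1
        · subst h1
          exact ⟨botE n i a (mm n i - 1), ⟨a, ha, mm n i - 1, by omega,
            Or.inl ⟨by unfold topOK; norm_num, Or.inr rfl⟩⟩,
            by rw [botE, mem_pair]; left; rfl⟩
        · by_cases h2 : k = 0
          · subst h2
            refine ⟨botE n i a (mm n i - 1), ⟨a, ha, mm n i - 1, by omega,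
              Or.inl ⟨by unfold topOK; norm_num, Or.inr rfl⟩⟩, ?_⟩
            rw [botE, mem_pair]; right
            have e : mm n i - 1 + 1 = mm n i := by omega
            rw [e, Nat.mod_self]
          · exact ⟨rungE n i a k, ⟨a, ha, k, hk, Or.inr ⟨by unfold rungOK; norm_num; omega, rfl⟩⟩,
              by rw [rungE, mem_pair]; right; rfl⟩

include hi in
theorem FF_disj (hin : i < n) (hodd : n % 2 = 1)
    (hc : c = 1 ∨ c = 2 ∨ c = 3) (hc' : c' = 1 ∨ c' = 2 ∨ c' = 3) (hcc : c ≠ c') :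
    Disjoint (FF n i c) (FF n i c') := by
  have hn : 0 < n := by omega
  have hm3 : 3 ≤ mm n i := mm_ge3 hi hin hodd
  have hmo : mm n i % 2 = 1 := mm_odd hi hodd
  rw [Set.disjoint_left]
  rintro p ⟨a, ha, k, hk, hp⟩ ⟨b, hb, l, hl, hq⟩
  rcases hp with ⟨ht1, hp | hp⟩ | ⟨hr1, hp⟩ <;>
    rcases hq with ⟨ht2, hq | hq⟩ | ⟨hr2, hq⟩ <;> subst hp
  · obtain ⟨e1, e2⟩ := topE_eq hi hin ha hb hk hl hm3 hq
    subst e1; subst e2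
    rcases hc with rfl | rfl | rfl <;> rcases hc' with rfl | rfl | rfl <;>
      first
        | exact hcc rfl
        | (norm_num [topOK] at ht1 ht2; omega)
  · exact topE_ne_botE hi hin ha hb hk hl hq
  · exact topE_ne_rungE hi hin ha hb hk hl hq
  · exact topE_ne_botE hi hin hb ha hl hk hq.symm
  · obtain ⟨e1, e2⟩ := botE_eq hi hin ha hb hk hl hm3 hq
    subst e1; subst e2
    rcases hc with rfl | rfl | rfl <;> rcases hc' with rfl | rfl | rfl <;>
      first
        | exact hcc rfl
        | (norm_num [topOK] at ht1 ht2; omega)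
  · exact botE_ne_rungE hi hin ha hb hk hl hq
  · exact topE_ne_rungE hi hin hb ha hl hk hq.symm
  · exact botE_ne_rungE hi hin hb ha hl hk hq.symm
  · obtain ⟨e1, e2⟩ := rungE_eq hi hin ha hb hk hl hq
    subst e1; subst e2
    rcases hc with rfl | rfl | rfl <;> rcases hc' with rfl | rfl | rfl <;>
      first
        | exact hcc rfl
        | (norm_num [rungOK] at hr1 hr2; omega)

include hi in
theorem FF_union (hin : i < n) (hodd : n % 2 = 1) :
    FF n i 1 ∪ FF n i 2 ∪ FF n i 3 = AA n i ∪ BB n i ∪ DD n (i - 1) := by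
  have hn : 0 < n := by omega
  have hm3 : 3 ≤ mm n i := mm_ge3 hi hin hodd
  have hmo : mm n i % 2 = 1 := mm_odd hi hodd
  ext p
  constructor
  · rintro ((⟨a, ha, k, hk, hp⟩ | ⟨a, ha, k, hk, hp⟩) | ⟨a, ha, k, hk, hp⟩) <;>
      rcases hp with ⟨-, hp | hp⟩ | ⟨-, hp⟩ <;> subst hp
    · exact Or.inl (Or.inl (topE_mem_AA hi hk hin))
    · exact Or.inl (Or.inr (botE_mem_BB hi hk hin))
    · exact Or.inr (rungE_mem_DD hi hk hin)
    · exact Or.inl (Or.inl (topE_mem_AA hi hk hin))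
    · exact Or.inl (Or.inr (botE_mem_BB hi hk hin))
    · exact Or.inr (rungE_mem_DD hi hk hin)
    · exact Or.inl (Or.inl (topE_mem_AA hi hk hin))
    · exact Or.inl (Or.inr (botE_mem_BB hi hk hin))
    · exact Or.inr (rungE_mem_DD hi hk hin)
  · rintro ((hp | hp) | hp)
    · obtain ⟨a, k, ha, hk, rfl⟩ := AA_sub hi hin hp
      by_cases h1 : k = mm n i - 1
      · exact Or.inr ⟨a, ha, k, hk, Or.inl ⟨by unfold topOK; norm_num; omega, Or.inl rfl⟩⟩
      · by_cases h2 : k % 2 = 0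
        · exact Or.inl (Or.inl ⟨a, ha, k, hk,
            Or.inl ⟨by unfold topOK; norm_num; omega, Or.inl rfl⟩⟩)
        · exact Or.inl (Or.inr ⟨a, ha, k, hk,
            Or.inl ⟨by unfold topOK; norm_num; omega, Or.inl rfl⟩⟩)
    · obtain ⟨a, k, ha, hk, rfl⟩ := BB_sub hi hin hp
      by_cases h1 : k = mm n i - 1
      · exact Or.inr ⟨a, ha, k, hk, Or.inl ⟨by unfold topOK; norm_num; omega, Or.inr rfl⟩⟩
      · by_cases h2 : k % 2 = 0
        · exact Or.inl (Or.inl ⟨a, ha, k, hk,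
            Or.inl ⟨by unfold topOK; norm_num; omega, Or.inr rfl⟩⟩)
        · exact Or.inl (Or.inr ⟨a, ha, k, hk,
            Or.inl ⟨by unfold topOK; norm_num; omega, Or.inr rfl⟩⟩)
    · obtain ⟨a, k, ha, hk, rfl⟩ := DD_sub hi hin hp
      by_cases h1 : k = mm n i - 1
      · exact Or.inl (Or.inl ⟨a, ha, k, hk, Or.inr ⟨by unfold rungOK; norm_num; omega, rfl⟩⟩)
      · by_cases h2 : k = 0
        · exact Or.inl (Or.inr ⟨a, ha, k, hk, Or.inr ⟨by unfold rungOK; norm_num; omega, rfl⟩⟩)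
        · exact Or.inr ⟨a, ha, k, hk, Or.inr ⟨by unfold rungOK; norm_num; omega, rfl⟩⟩

end main

end geom

end ABDaux


/-- For `n ≥ 7` (not necessarily prime) with `n ≡ 1, 5 (mod 6)` and `1 ≤ i ≤ (n-1)/2`, the edge set
`A_i ∪ B_i ∪ D_{i-1}` can be partitioned into three perfect matchings of `K_{2n}`. -/
theorem ABD_three_factors_general (n i : ℕ) (h7 : 7 ≤ n)
    (hmod : n % 6 = 1 ∨ n % 6 = 5) (hi1 : 1 ≤ i) (hi2 : i ≤ (n - 1) / 2) :
    ∃ F1 F2 F3 : Set (Finset ℕ),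
      IsOneFactor n F1 ∧ IsOneFactor n F2 ∧ IsOneFactor n F3 ∧
      Disjoint F1 F2 ∧ Disjoint F1 F3 ∧ Disjoint F2 F3 ∧
      F1 ∪ F2 ∪ F3 = AA n i ∪ BB n i ∪ DD n (i - 1) := by
  have hi : 0 < i := hi1
  have hin : i < n := by omega
  have hodd : n % 2 = 1 := by omega
  refine ⟨ABDaux.FF n i 1, ABDaux.FF n i 2, ABDaux.FF n i 3,
    ABDaux.FF_oneFactor hi hin hodd (Or.inl rfl),
    ABDaux.FF_oneFactor hi hin hodd (Or.inr (Or.inl rfl)),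
    ABDaux.FF_oneFactor hi hin hodd (Or.inr (Or.inr rfl)),
    ABDaux.FF_disj hi hin hodd (Or.inl rfl) (Or.inr (Or.inl rfl)) (by norm_num),
    ABDaux.FF_disj hi hin hodd (Or.inl rfl) (Or.inr (Or.inr rfl)) (by norm_num),
    ABDaux.FF_disj hi hin hodd (Or.inr (Or.inl rfl)) (Or.inr (Or.inr rfl)) (by norm_num),
    ABDaux.FF_union hi hin hodd⟩
end

section
/- Let v be even, and suppose B^{(1)}, ..., B^{(k)} are k pairwise disjoint Steiner quadruple systems on Z_v, F and F' are one-factorizations of K_v, and L is a k × (v-1) Latin rectangle over {0,...,v-2} whose rows define permutations α_1,...,α_k. Applying the DB Construction with B^{(m)} and α_m for each m yields k pairwise disjoint Steiner quadruple systems of order 2v on Z_v × Z_2. -/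
/-!
A finite subset of `Z_v × Z_2` is determined by its two levels, and the blocks of the DB
Construction are exactly the sets with levels `(b, ∅)` or `(∅, b)` for `b ∈ B`, or `(p, p')`
for `p ∈ F_i` and `p' ∈ F'_{α i}`. A triple with two points on level 0 and one point `y` on
level 1 lies in exactly one block: the pair lies in exactly one `F_i`, and `y` in exactly one
edge of the matching `F'_{α i}`; a triple on level 0 lies in exactly one block because `B` is
an SQS. Exchanging the levels, which replaces `(F, F', α)` by `(F', F, α⁻¹)`, handles the other
triples. Two of the systems can only share a block with levels `(p, p')`, `p ∈ F_i`; then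
`p' ∈ F'_{α_m i} ∩ F'_{α_m' i}`, which the Latin property forbids.
-/

/-- A Steiner quadruple system on the point set `α`. -/
def IsSQS {α : Type} (B : Set (Finset α)) : Prop :=
  (∀ b ∈ B, b.card = 4) ∧ ∀ t : Finset α, t.card = 3 → ∃! b, b ∈ B ∧ t ⊆ b

/-- A one-factorization of `K_v` on the vertex set `Z_v`: `v - 1` perfect matchings
partitioning all 2-subsets. -/
def IsOneFactorization (v : ℕ) (F : Fin (v - 1) → Set (Finset (ZMod v))) : Prop :=
  (∀ i, (∀ p ∈ F i, p.card = 2) ∧ ((F i).Pairwise fun p q => Disjoint p q) ∧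
    ∀ x : ZMod v, ∃ p ∈ F i, x ∈ p) ∧
  ∀ p : Finset (ZMod v), p.card = 2 → ∃! i, p ∈ F i

/-- The blocks of the DB (doubling) Construction on `Z_v × Z_2`. -/
def dbBlocks (v : ℕ) (B : Set (Finset (ZMod v)))
    (F F' : Fin (v - 1) → Set (Finset (ZMod v))) (α : Equiv.Perm (Fin (v - 1))) :
    Set (Finset (ZMod v × ZMod 2)) :=
  { q | (∃ b ∈ B, q = b.image fun x => (x, (0 : ZMod 2))) ∨
        (∃ b ∈ B, q = b.image fun x => (x, (1 : ZMod 2))) ∨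
        (∃ i, ∃ p ∈ F i, ∃ p' ∈ F' (α i),
          q = (p.image fun x => (x, (0 : ZMod 2))) ∪ (p'.image fun x => (x, (1 : ZMod 2)))) }

section TwoLevel

variable {X : Type} [DecidableEq X]

def twoLevel (s t : Finset X) : Finset (X × ZMod 2) :=
  (s.image fun x => (x, (0 : ZMod 2))) ∪ (t.image fun x => (x, (1 : ZMod 2)))

def level (j : ZMod 2) (q : Finset (X × ZMod 2)) : Finset X :=
  (q.filter (·.2 = j)).image Prod.fst

@[simp]
lemma mem_level {j : ZMod 2} {q : Finset (X × ZMod 2)} {x : X} :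
    x ∈ level j q ↔ (x, j) ∈ q := by
  simp [level]

@[simp]
lemma mk_zero_mem_twoLevel {s t : Finset X} {x : X} : (x, 0) ∈ twoLevel s t ↔ x ∈ s := by
  simp [twoLevel]

@[simp]
lemma mk_one_mem_twoLevel {s t : Finset X} {x : X} : (x, 1) ∈ twoLevel s t ↔ x ∈ t := by
  simp [twoLevel]

@[simp]
lemma level_zero_twoLevel (s t : Finset X) : level 0 (twoLevel s t) = s := by
  ext x; simp

@[simp]
lemma level_one_twoLevel (s t : Finset X) : level 1 (twoLevel s t) = t := by
  ext x; simp

lemma twoLevel_level (q : Finset (X × ZMod 2)) : twoLevel (level 0 q) (level 1 q) = q := by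
  ext ⟨x, j⟩
  obtain rfl | rfl : j = 0 ∨ j = 1 := by revert j; decide
  all_goals simp

lemma twoLevel_inj {s t s' t' : Finset X} :
    twoLevel s t = twoLevel s' t' ↔ s = s' ∧ t = t' := by
  refine ⟨fun h => ⟨?_, ?_⟩, by rintro ⟨rfl, rfl⟩; rfl⟩
  · simpa using congrArg (level 0) h
  · simpa using congrArg (level 1) h

lemma twoLevel_subset_twoLevel {s t s' t' : Finset X} :
    twoLevel s t ⊆ twoLevel s' t' ↔ s ⊆ s' ∧ t ⊆ t' := by
  constructor
  · intro h
    exact ⟨fun x hx => by simpa using h (mk_zero_mem_twoLevel.mpr hx),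
      fun x hx => by simpa using h (mk_one_mem_twoLevel.mpr hx)⟩
  · rintro ⟨hs, ht⟩
    exact Finset.union_subset_union (Finset.image_subset_image hs) (Finset.image_subset_image ht)

lemma card_twoLevel (s t : Finset X) : (twoLevel s t).card = s.card + t.card := by
  rw [twoLevel, Finset.card_union_of_disjoint (by simp [Finset.disjoint_left]),
    Finset.card_image_of_injective _ (Prod.mk_left_injective _),
    Finset.card_image_of_injective _ (Prod.mk_left_injective _)]

lemma isSQS_of_twoLevel {S : Set (Finset (X × ZMod 2))}
    (hcard : ∀ s t, twoLevel s t ∈ S → s.card + t.card = 4)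
    (hcover : ∀ a b : Finset X, a.card + b.card = 3 →
      ∃! st : Finset X × Finset X, twoLevel st.1 st.2 ∈ S ∧ a ⊆ st.1 ∧ b ⊆ st.2) :
    IsSQS S := by
  refine ⟨fun q hq => ?_, fun u hu => ?_⟩
  · rw [← twoLevel_level q] at hq ⊢
    rw [card_twoLevel]
    exact hcard _ _ hq
  · rw [← twoLevel_level u, card_twoLevel] at hu
    obtain ⟨⟨s, t⟩, ⟨hst, hsub⟩, huniq⟩ := hcover _ _ hu
    refine ⟨twoLevel s t, ⟨hst, ?_⟩, fun q ⟨hq, huq⟩ => ?_⟩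
    · rwa [← twoLevel_level u, twoLevel_subset_twoLevel]
    · rw [← twoLevel_level u, ← twoLevel_level q, twoLevel_subset_twoLevel] at huq
      rw [← twoLevel_level q] at hq ⊢
      obtain ⟨h0, h1⟩ := Prod.mk.inj (huniq (level 0 q, level 1 q) ⟨hq, huq⟩)
      rw [h0, h1]

end TwoLevel

namespace IsOneFactorization

variable {v : ℕ} {F : Fin (v - 1) → Set (Finset (ZMod v))}

lemma card_eq_two (hF : IsOneFactorization v F) {i : Fin (v - 1)} {p : Finset (ZMod v)}
    (hp : p ∈ F i) : p.card = 2 :=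
  (hF.1 i).1 p hp

lemma ne_empty (hF : IsOneFactorization v F) {i : Fin (v - 1)} {p : Finset (ZMod v)}
    (hp : p ∈ F i) : p ≠ ∅ := by
  rintro rfl
  simpa using hF.card_eq_two hp

lemma index_unique (hF : IsOneFactorization v F) {i j : Fin (v - 1)} {p : Finset (ZMod v)}
    (hi : p ∈ F i) (hj : p ∈ F j) : i = j :=
  (hF.2 p (hF.card_eq_two hi)).unique hi hj

lemma eq_of_mem_of_mem (hF : IsOneFactorization v F) {i : Fin (v - 1)}
    {p q : Finset (ZMod v)} {x : ZMod v} (hp : p ∈ F i) (hq : q ∈ F i) (hxp : x ∈ p)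
    (hxq : x ∈ q) : p = q := by
  by_contra hpq
  exact Finset.disjoint_left.mp ((hF.1 i).2.1 hp hq hpq) hxp hxq

end IsOneFactorization

section DBConstruction

variable {v : ℕ} {B : Set (Finset (ZMod v))} {F F' : Fin (v - 1) → Set (Finset (ZMod v))}

def IsDBLevelPair (B : Set (Finset (ZMod v))) (F F' : Fin (v - 1) → Set (Finset (ZMod v)))
    (α : Equiv.Perm (Fin (v - 1))) (s t : Finset (ZMod v)) : Prop :=
  (s ∈ B ∧ t = ∅) ∨ (s = ∅ ∧ t ∈ B) ∨ ∃ i, s ∈ F i ∧ t ∈ F' (α i)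

lemma twoLevel_mem_dbBlocks {α : Equiv.Perm (Fin (v - 1))} {s t : Finset (ZMod v)} :
    twoLevel s t ∈ dbBlocks v B F F' α ↔ IsDBLevelPair B F F' α s t := by
  have h0 (b : Finset (ZMod v)) : b.image (fun x => (x, (0 : ZMod 2))) = twoLevel b ∅ := by
    simp [twoLevel]
  have h1 (b : Finset (ZMod v)) : b.image (fun x => (x, (1 : ZMod 2))) = twoLevel ∅ b := by
    simp [twoLevel]
  change ((∃ b ∈ B, _) ∨ (∃ b ∈ B, _) ∨
    ∃ i, ∃ p ∈ F i, ∃ p' ∈ F' (α i), twoLevel s t = twoLevel p p') ↔ _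
  simp [h0, h1, twoLevel_inj, IsDBLevelPair, and_comm]

lemma isDBLevelPair_swap {α : Equiv.Perm (Fin (v - 1))} {s t : Finset (ZMod v)} :
    IsDBLevelPair B F' F α.symm t s ↔ IsDBLevelPair B F F' α s t := by
  unfold IsDBLevelPair
  rw [α.symm.exists_congr_left]
  simp only [Equiv.symm_symm, Equiv.symm_apply_apply]
  tauto

section Cover

variable (α : Equiv.Perm (Fin (v - 1)))

lemma existsUnique_isDBLevelPair_of_card_three (hB : IsSQS B) (hF : IsOneFactorization v F)
    {a : Finset (ZMod v)} (ha : a.card = 3) :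
    ∃! st : Finset (ZMod v) × Finset (ZMod v),
      IsDBLevelPair B F F' α st.1 st.2 ∧ a ⊆ st.1 ∧ ∅ ⊆ st.2 := by
  obtain ⟨c, ⟨hc, hac⟩, huniq⟩ := hB.2 a ha
  refine ⟨(c, ∅), ⟨Or.inl ⟨hc, rfl⟩, hac, subset_rfl⟩, ?_⟩
  rintro ⟨s, t⟩ ⟨hst, has, -⟩
  have hcard := Finset.card_le_card has
  rcases hst with ⟨hs, rfl⟩ | ⟨rfl, -⟩ | ⟨i, hs, -⟩
  · rw [huniq s ⟨hs, has⟩]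
  · simp [ha] at hcard
  · rw [hF.card_eq_two hs] at hcard
    omega

lemma existsUnique_isDBLevelPair_of_card_two (hF : IsOneFactorization v F)
    (hF' : IsOneFactorization v F') {a : Finset (ZMod v)} (ha : a.card = 2) (y : ZMod v) :
    ∃! st : Finset (ZMod v) × Finset (ZMod v),
      IsDBLevelPair B F F' α st.1 st.2 ∧ a ⊆ st.1 ∧ {y} ⊆ st.2 := by
  obtain ⟨i, hai, hi⟩ := hF.2 a ha
  obtain ⟨e, he, hye⟩ := (hF'.1 (α i)).2.2 y
  refine ⟨(a, e), ⟨Or.inr (Or.inr ⟨i, hai, he⟩), subset_rfl, by simpa using hye⟩, ?_⟩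
  rintro ⟨s, t⟩ ⟨hst, has, hyt⟩
  dsimp only at hst has hyt
  rw [Finset.singleton_subset_iff] at hyt
  rcases hst with ⟨-, rfl⟩ | ⟨rfl, -⟩ | ⟨j, hs, ht⟩
  · simp at hyt
  · simpa [ha] using Finset.card_le_card has
  · have has : a = s := Finset.eq_of_subset_of_card_le has (by rw [hF.card_eq_two hs, ha])
    obtain rfl : j = i := hi j (has ▸ hs)
    rw [← has, hF'.eq_of_mem_of_mem ht he hyt hye]

lemma existsUnique_isDBLevelPair_of_two_le_card (hB : IsSQS B) (hF : IsOneFactorization v F)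
    (hF' : IsOneFactorization v F') {a b : Finset (ZMod v)} (hab : a.card + b.card = 3)
    (ha : 2 ≤ a.card) :
    ∃! st : Finset (ZMod v) × Finset (ZMod v),
      IsDBLevelPair B F F' α st.1 st.2 ∧ a ⊆ st.1 ∧ b ⊆ st.2 := by
  obtain ha | ha : a.card = 3 ∨ a.card = 2 := by omega
  · obtain rfl : b = ∅ := Finset.card_eq_zero.mp (by omega)
    exact existsUnique_isDBLevelPair_of_card_three α hB hF ha
  · obtain ⟨y, rfl⟩ := Finset.card_eq_one.mp (by omega : b.card = 1)
    exact existsUnique_isDBLevelPair_of_card_two α hF hF' ha y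

lemma existsUnique_isDBLevelPair (hB : IsSQS B) (hF : IsOneFactorization v F)
    (hF' : IsOneFactorization v F') {a b : Finset (ZMod v)} (hab : a.card + b.card = 3) :
    ∃! st : Finset (ZMod v) × Finset (ZMod v),
      IsDBLevelPair B F F' α st.1 st.2 ∧ a ⊆ st.1 ∧ b ⊆ st.2 := by
  by_cases ha : 2 ≤ a.card
  · exact existsUnique_isDBLevelPair_of_two_le_card α hB hF hF' hab ha
  · have hswap := existsUnique_isDBLevelPair_of_two_le_card α.symm hB hF' hF
      (a := b) (b := a) (by omega) (by omega)
    refine ((Equiv.prodComm _ _).existsUnique_congr fun st => ?_).mp hswap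
    rw [Equiv.prodComm_apply, Prod.fst_swap, Prod.snd_swap, isDBLevelPair_swap,
      and_comm (a := b ⊆ _)]

end Cover

theorem isSQS_dbBlocks (hB : IsSQS B) (hF : IsOneFactorization v F)
    (hF' : IsOneFactorization v F') (α : Equiv.Perm (Fin (v - 1))) :
    IsSQS (dbBlocks v B F F' α) := by
  refine isSQS_of_twoLevel (fun s t hst => ?_) (fun a b hab => ?_)
  · rcases twoLevel_mem_dbBlocks.mp hst with ⟨hs, rfl⟩ | ⟨rfl, ht⟩ | ⟨i, hs, ht⟩
    · simpa using hB.1 s hs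
    · simpa using hB.1 t ht
    · rw [hF.card_eq_two hs, hF'.card_eq_two ht]
  · simpa only [twoLevel_mem_dbBlocks] using existsUnique_isDBLevelPair α hB hF hF' hab

theorem disjoint_dbBlocks {B₁ B₂ : Set (Finset (ZMod v))} (hB : Disjoint B₁ B₂)
    (hF : IsOneFactorization v F) (hF' : IsOneFactorization v F')
    {α₁ α₂ : Equiv.Perm (Fin (v - 1))} (hα : ∀ i, α₁ i ≠ α₂ i) :
    Disjoint (dbBlocks v B₁ F F' α₁) (dbBlocks v B₂ F F' α₂) := by
  rw [Set.disjoint_left]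
  intro q hq₁ hq₂
  rw [← twoLevel_level q, twoLevel_mem_dbBlocks] at hq₁ hq₂
  rcases hq₁ with ⟨hs, ht⟩ | ⟨hs, ht⟩ | ⟨i, hs, ht⟩ <;>
    rcases hq₂ with ⟨hs', ht'⟩ | ⟨hs', ht'⟩ | ⟨j, hs', ht'⟩
  · exact Set.disjoint_left.mp hB hs hs'
  -- blocks `(b, ∅)` and `(∅, b')` can only coincide if `∅ ∈ B₁ ∩ B₂`
  · exact Set.disjoint_left.mp hB (hs' ▸ hs) (ht ▸ ht')
  · exact hF'.ne_empty ht' ht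
  · exact Set.disjoint_left.mp hB (ht' ▸ ht) (hs ▸ hs')
  · exact Set.disjoint_left.mp hB ht ht'
  · exact hF.ne_empty hs' hs
  · exact hF'.ne_empty ht ht'
  · exact hF.ne_empty hs hs'
  · obtain rfl := hF.index_unique hs hs'
    exact hα i (hF'.index_unique ht ht')

end DBConstruction

theorem db_construction_pdq_general (v k : ℕ)
    (B : Fin k → Set (Finset (ZMod v)))
    (hB : ∀ m, IsSQS (B m))
    (hBdisj : ∀ m m', m ≠ m' → Disjoint (B m) (B m'))
    (F F' : Fin (v - 1) → Set (Finset (ZMod v)))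
    (hF : IsOneFactorization v F) (hF' : IsOneFactorization v F')
    (α : Fin k → Equiv.Perm (Fin (v - 1)))
    (hlatin : ∀ m m', m ≠ m' → ∀ i, α m i ≠ α m' i) :
    (∀ m, IsSQS (dbBlocks v (B m) F F' (α m))) ∧
    (∀ m m', m ≠ m' →
      Disjoint (dbBlocks v (B m) F F' (α m)) (dbBlocks v (B m') F F' (α m'))) :=
  ⟨fun m => isSQS_dbBlocks (hB m) hF hF' (α m),
    fun m m' hmm' => disjoint_dbBlocks (hBdisj m m' hmm') hF hF' (hlatin m m' hmm')⟩

/-- Applying the DB Construction to `k` pairwise disjoint SQS(v)s with the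
permutations given by the rows of a `k × (v-1)` Latin rectangle yields `k` pairwise
disjoint Steiner quadruple systems of order `2v` on `Z_v × Z_2`. -/
theorem db_construction_pdq (v k : ℕ) (hv : Even v)
    (B : Fin k → Set (Finset (ZMod v)))
    (hB : ∀ m, IsSQS (B m))
    (hBdisj : ∀ m m', m ≠ m' → Disjoint (B m) (B m'))
    (F F' : Fin (v - 1) → Set (Finset (ZMod v)))
    (hF : IsOneFactorization v F) (hF' : IsOneFactorization v F')
    (α : Fin k → Equiv.Perm (Fin (v - 1)))
    (hlatin : ∀ m m', m ≠ m' → ∀ i, α m i ≠ α m' i) :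
    (∀ m, IsSQS (dbBlocks v (B m) F F' (α m))) ∧
    (∀ m m', m ≠ m' →
      Disjoint (dbBlocks v (B m) F F' (α m)) (dbBlocks v (B m') F F' (α m'))) :=
  db_construction_pdq_general v k B hB hBdisj F F' hF hF' α hlatin
end
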